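/- arXiv:1904.02282 — 2 statements merged into one kernel-verified Lean document; each statement's English description precedes it below -/
import Mathlib

section
/- Let n ≥ 1, 1 ≤ p < ∞, and let X be a closed linear subspace of L^p(ℝ^n). Then X is translation invariant (i.e., f ∈ X implies f_y ∈ X for every y ∈ ℝ^n) if and only if X is an L^1(ℝ^n)-submodule of L^p(ℝ^n), i.e., g∗f ∈ X for every g ∈ L^1(ℝ^n) and f ∈ X. -/
open MeasureTheory Filter Topology
open scoped FourierTransform RealInnerProductSpace ENNReal

noncomputable section
set_option linter.unusedSectionVars false
set_option linter.unusedVariables false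
set_option maxHeartbeats 1000000

namespace Stmt1Aux

variable {n : ℕ} {p : ℝ≥0∞} [Fact (1 ≤ p)]

abbrev Eu (n : ℕ) := EuclideanSpace ℝ (Fin n)
abbrev μn (n : ℕ) : Measure (Eu n) := volume

/-- Translation by `y` as a map on `Lp`. -/
def T (y : Eu n) (f : Lp ℂ p (μn n)) : Lp ℂ p (μn n) :=
  Lp.compMeasurePreserving (· - y) (measurePreserving_sub_right _ y) f

lemma coeFn_T (y : Eu n) (f : Lp ℂ p (μn n)) :
    ⇑(T y f) =ᵐ[μn n] fun x => f (x - y) :=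
  Lp.coeFn_compMeasurePreserving f _

lemma norm_T (y : Eu n) (f : Lp ℂ p (μn n)) : ‖T y f‖ = ‖f‖ :=
  (Lp.isometry_compMeasurePreserving (p := p) (E := ℂ)
    (measurePreserving_sub_right (μn n) y)).norm_map_of_map_zero (by simp [T]) f

lemma continuous_T (hp : p ≠ ∞) (f : Lp ℂ p (μn n)) :
    Continuous fun y : Eu n => (T y f : Lp ℂ p (μn n)) := by
  have hcm : Continuous fun y : Eu n =>
      (ContinuousMap.mk (fun x : Eu n => x - y) (by continuity) : C(Eu n, Eu n)) := by
    have : Continuous fun q : Eu n × Eu n => q.2 - q.1 := continuous_snd.sub continuous_fst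
    exact (ContinuousMap.mk _ this).curry.continuous
  have := Lp.compMeasurePreserving_continuous (μn n) (μn n) ℂ hp
  have hc : Continuous fun y : Eu n =>
      ((f, ⟨ContinuousMap.mk (fun x : Eu n => x - y) (by continuity),
        measurePreserving_sub_right (μn n) y⟩) :
        Lp ℂ p (μn n) × {f : C(Eu n, Eu n) // MeasurePreserving f (μn n) (μn n)}) :=
    continuous_const.prodMk (hcm.subtype_mk _)
  exact this.comp hc

lemma smul_T_mem {X : Submodule ℂ (Lp ℂ p (μn n))}
    (hX : ∀ f ∈ X, ∀ y : Eu n, ∀ g : Lp ℂ p (μn n),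
      (⇑g =ᵐ[μn n] fun x => f (x - y)) → g ∈ X)
    {f : Lp ℂ p (μn n)} (hf : f ∈ X) (c : ℂ) (y : Eu n) : c • T y f ∈ X :=
  X.smul_mem c (hX f hf y (T y f) (coeFn_T y f))


lemma memLp_integrableOn {u : Eu n → ℂ} (hu : MemLp u p (μn n))
    {s : Set (Eu n)} (hμs : μn n s < ∞) : IntegrableOn u s (μn n) := by
  haveI := Fact.mk hμs
  exact (hu.restrict s).integrable Fact.out

lemma setIntegral_norm_bound {u : Eu n → ℂ} (hu : MemLp u p (μn n)) (hp : p ≠ ∞)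
    {s : Set (Eu n)} (hμs : μn n s < ∞) :
    ∫ x in s, ‖u x‖ ∂(μn n) ≤
      ((μn n s) ^ (1 - 1 / p.toReal)).toReal * (eLpNorm u p (μn n)).toReal := by
  have hexp : (0:ℝ) ≤ 1 - 1 / p.toReal := by
    have h1 : (1:ℝ) ≤ p.toReal := by
      have := ENNReal.toReal_mono hp (Fact.out : (1:ℝ≥0∞) ≤ p)
      simpa using this
    have hpos : (0:ℝ) < p.toReal := lt_of_lt_of_le one_pos h1
    have : 1 / p.toReal ≤ 1 := by
      rw [div_le_one hpos]; exact h1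
    linarith
  have h1 : eLpNorm u 1 ((μn n).restrict s) ≤
      eLpNorm u p (μn n) * (μn n s) ^ (1 - 1 / p.toReal) := by
    have := eLpNorm_le_eLpNorm_mul_rpow_measure_univ (μ := (μn n).restrict s)
      (Fact.out : (1:ℝ≥0∞) ≤ p) hu.1.restrict
    simp only [ENNReal.toReal_one, Measure.restrict_apply_univ] at this
    rw [show (1:ℝ)/1 - 1/p.toReal = 1 - 1/p.toReal by norm_num] at this
    refine this.trans ?_
    gcongr
    exact Measure.restrict_le_self
  have heq : ∫ x in s, ‖u x‖ ∂(μn n) = (eLpNorm u 1 ((μn n).restrict s)).toReal := by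
    rw [eLpNorm_one_eq_lintegral_enorm, integral_norm_eq_lintegral_enorm hu.1.restrict]
  rw [heq]
  have hfin : eLpNorm u p (μn n) * (μn n s) ^ (1 - 1 / p.toReal) ≠ ∞ :=
    ENNReal.mul_ne_top hu.2.ne (ENNReal.rpow_lt_top_of_nonneg hexp hμs.ne).ne
  calc (eLpNorm u 1 ((μn n).restrict s)).toReal
      ≤ (eLpNorm u p (μn n) * (μn n s) ^ (1 - 1 / p.toReal)).toReal :=
        ENNReal.toReal_mono hfin h1
    _ = ((μn n s) ^ (1 - 1 / p.toReal)).toReal * (eLpNorm u p (μn n)).toReal := by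
        rw [ENNReal.toReal_mul, mul_comm]

/-- The continuous linear functional `u ↦ ∫ x in s, u x` on `Lp`. -/
def setCLM (hp : p ≠ ∞) {s : Set (Eu n)} (hμs : μn n s < ∞) :
    Lp ℂ p (μn n) →L[ℂ] ℂ :=
  LinearMap.mkContinuous
    { toFun := fun u => ∫ x in s, u x ∂(μn n)
      map_add' := fun u v => by
        rw [integral_congr_ae (ae_restrict_of_ae (Lp.coeFn_add u v))]
        simp only [Pi.add_apply]
        exact integral_add (memLp_integrableOn (Lp.memLp u) hμs)
          (memLp_integrableOn (Lp.memLp v) hμs)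
      map_smul' := fun c u => by
        rw [integral_congr_ae (ae_restrict_of_ae (Lp.coeFn_smul c u))]
        simpa using integral_smul c (fun x => u x) }
    (((μn n s) ^ (1 - 1 / p.toReal)).toReal)
    (fun u => by
      simp only [LinearMap.coe_mk, AddHom.coe_mk]
      calc ‖∫ x in s, u x ∂(μn n)‖ ≤ ∫ x in s, ‖u x‖ ∂(μn n) :=
            norm_integral_le_integral_norm _
        _ ≤ ((μn n s) ^ (1 - 1 / p.toReal)).toReal * (eLpNorm u p (μn n)).toReal :=
            setIntegral_norm_bound (Lp.memLp u) hp hμs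
        _ = _ := by rw [Lp.norm_def])

lemma setCLM_apply (hp : p ≠ ∞) {s : Set (Eu n)} (hμs : μn n s < ∞) (u : Lp ℂ p (μn n)) :
    setCLM hp hμs u = ∫ x in s, u x ∂(μn n) := rfl


lemma qmp_sub {s : Set (Eu n)} :
    Measure.QuasiMeasurePreserving (fun q : Eu n × Eu n => q.1 - q.2)
      (((μn n).restrict s).prod (μn n)) (μn n) :=
  (quasiMeasurePreserving_sub (μn n) (μn n)).mono
    ((Measure.absolutelyContinuous_of_le Measure.restrict_le_self).prod
      Measure.AbsolutelyContinuous.rfl)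
    Measure.AbsolutelyContinuous.rfl

lemma qmp_snd {s : Set (Eu n)} :
    Measure.QuasiMeasurePreserving (Prod.snd : Eu n × Eu n → Eu n)
      (((μn n).restrict s).prod (μn n)) (μn n) :=
  ⟨measurable_snd, by
    rw [Measure.map_snd_prod]
    exact Measure.smul_absolutelyContinuous⟩

lemma integrable_F (hp : p ≠ ∞) (g : Lp ℂ 1 (μn n)) (f : Lp ℂ p (μn n)) :
    Integrable (fun y => g y • T y f) (μn n) := by
  have hsm : AEStronglyMeasurable (fun y => g y • T y f) (μn n) :=
    (Lp.aestronglyMeasurable g).smul (continuous_T hp f).aestronglyMeasurable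
  have hgi : Integrable (fun y => ‖g y‖ * ‖f‖) (μn n) :=
    (L1.integrable_coeFn g).norm.mul_const _
  exact hgi.mono' hsm (Eventually.of_forall fun y =>
    le_of_eq (by rw [norm_smul, norm_T]))

lemma norm_translate (y : Eu n) (f : Lp ℂ p (μn n)) :
    (eLpNorm (fun x : Eu n => f (x - y)) p (μn n)).toReal = ‖f‖ := by
  rw [← eLpNorm_congr_ae (coeFn_T y f), ← Lp.norm_def, norm_T]

lemma memLp_translate (y : Eu n) (f : Lp ℂ p (μn n)) :
    MemLp (fun x : Eu n => f (x - y)) p (μn n) :=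
  (Lp.memLp (T y f)).ae_eq (coeFn_T y f)

lemma integrable_prod (hp : p ≠ ∞) (g : Lp ℂ 1 (μn n)) (f : Lp ℂ p (μn n))
    {s : Set (Eu n)} (hμs : μn n s < ∞) :
    Integrable (fun q : Eu n × Eu n => g q.2 * f (q.1 - q.2))
      (((μn n).restrict s).prod (μn n)) := by
  have hae : AEStronglyMeasurable (fun q : Eu n × Eu n => g q.2 * f (q.1 - q.2))
      (((μn n).restrict s).prod (μn n)) :=
    ((Lp.aestronglyMeasurable g).comp_quasiMeasurePreserving qmp_snd).mul
      ((Lp.aestronglyMeasurable f).comp_quasiMeasurePreserving qmp_sub)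
  rw [integrable_prod_iff' hae]
  constructor
  · refine Eventually.of_forall fun y => ?_
    show Integrable (fun x : Eu n => g y * f (x - y)) ((μn n).restrict s)
    exact (memLp_integrableOn (memLp_translate y f) hμs).const_mul _
  · have hC : ∀ y : Eu n, ∫ x in s, ‖g y * f (x - y)‖ ∂(μn n) ≤
        ‖g y‖ * (((μn n s) ^ (1 - 1 / p.toReal)).toReal * ‖f‖) := by
      intro y
      have h1 : ∀ x, ‖g y * f (x - y)‖ = ‖g y‖ * ‖f (x - y)‖ := fun x => norm_mul _ _
      simp only [h1]
      rw [integral_const_mul]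
      refine mul_le_mul_of_nonneg_left ?_ (norm_nonneg _)
      have := setIntegral_norm_bound (memLp_translate y f) hp hμs
      rwa [norm_translate y f] at this
    have hgi : Integrable (fun y => ‖g y‖ * (((μn n s) ^ (1 - 1 / p.toReal)).toReal * ‖f‖))
        (μn n) := (L1.integrable_coeFn g).norm.mul_const _
    refine hgi.mono' hae.norm.prod_swap.integral_prod_right' (Eventually.of_forall fun y => ?_)
    rw [Real.norm_of_nonneg (integral_nonneg fun x => norm_nonneg _)]
    exact hC y

lemma swap_conv (g : Lp ℂ 1 (μn n)) (f : Lp ℂ p (μn n)) :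
    (fun x : Eu n => ∫ y, g (x - y) * f y ∂(μn n)) =
      fun x => ∫ y, g y * f (x - y) ∂(μn n) := by
  funext x
  have := integral_sub_left_eq_self (fun t => g t * f (x - t)) (μn n) x
  simp only [sub_sub_cancel] at this
  exact this

lemma coeFn_integral_F (hp : p ≠ ∞) (g : Lp ℂ 1 (μn n)) (f : Lp ℂ p (μn n)) :
    ⇑(∫ y, g y • T y f ∂(μn n)) =ᵐ[μn n] fun x => ∫ y, g (x - y) * f y ∂(μn n) := by
  rw [swap_conv]
  have key : ∀ s : Set (Eu n), MeasurableSet s → μn n s < ∞ →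
      ∫ x in s, (∫ y, g y • T y f ∂(μn n)) x ∂(μn n) =
        ∫ x in s, (∫ y, g y * f (x - y) ∂(μn n)) ∂(μn n) := by
    intro s hs hμs
    have h1 : ∫ x in s, (∫ y, g y • T y f ∂(μn n)) x ∂(μn n) =
        setCLM hp hμs (∫ y, g y • T y f ∂(μn n)) := rfl
    have h2 : setCLM (n := n) hp hμs (∫ y, g y • T y f ∂(μn n)) =
        ∫ y, setCLM hp hμs (g y • T y f) ∂(μn n) :=
      (ContinuousLinearMap.integral_comp_comm _ (integrable_F hp g f)).symm
    have h3 : ∀ y : Eu n, setCLM (n := n) hp hμs (g y • T y f) =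
        ∫ x in s, g y * f (x - y) ∂(μn n) := by
      intro y
      rw [setCLM_apply]
      refine integral_congr_ae (ae_restrict_of_ae ?_)
      filter_upwards [Lp.coeFn_smul (g y) (T y f), coeFn_T y f] with x hx1 hx2
      rw [hx1]
      simp only [Pi.smul_apply, smul_eq_mul, hx2]
    rw [h1, h2]
    simp_rw [h3]
    exact (integral_integral_swap (integrable_prod hp g f hμs)).symm
  refine ae_eq_of_forall_setIntegral_eq_of_sigmaFinite
    (fun s hs hμs => memLp_integrableOn (Lp.memLp _) hμs)
    (fun s hs hμs => (integrable_prod hp g f hμs).integral_prod_left)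
    key

lemma integral_F_mem (hp : p ≠ ∞) {X : Submodule ℂ (Lp ℂ p (μn n))}
    (hXc : IsClosed (X : Set (Lp ℂ p (μn n))))
    (hX : ∀ f ∈ X, ∀ y : Eu n, ∀ g : Lp ℂ p (μn n),
      (⇑g =ᵐ[μn n] fun x => f (x - y)) → g ∈ X)
    (g : Lp ℂ 1 (μn n)) {f : Lp ℂ p (μn n)} (hf : f ∈ X) :
    (∫ y, g y • T y f ∂(μn n)) ∈ X := by
  haveI : CompleteSpace X := hXc.completeSpace_coe
  set F' : Eu n → X := fun y => ⟨g y • T y f, smul_T_mem hX hf _ y⟩ with hF'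
  have hval : (fun y => (F' y : Lp ℂ p (μn n))) = fun y => g y • T y f := rfl
  have hF'i : Integrable F' (μn n) := by
    constructor
    · have h1 : AEStronglyMeasurable (fun y => (F' y : Lp ℂ p (μn n))) (μn n) := by
        rw [hval]; exact (integrable_F hp g f).1
      exact (Topology.IsEmbedding.subtypeVal).aestronglyMeasurable_comp_iff.mp h1
    · exact (integrable_F hp g f).2
  have heq : (∫ y, g y • T y f ∂(μn n)) = X.subtypeL (∫ y, F' y ∂(μn n)) := by
    rw [← ContinuousLinearMap.integral_comp_comm _ hF'i]
    rfl
  rw [heq]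
  exact (∫ y, F' y ∂(μn n)).2

lemma T_mem_of_conv (hp : p ≠ ∞) {X : Submodule ℂ (Lp ℂ p (μn n))}
    (hXc : IsClosed (X : Set (Lp ℂ p (μn n))))
    (hconv : ∀ g : Lp ℂ 1 (μn n), ∀ f ∈ X, ∀ h : Lp ℂ p (μn n),
      (⇑h =ᵐ[μn n] fun x => ∫ y, g (x - y) * f y ∂(μn n)) → h ∈ X)
    {f : Lp ℂ p (μn n)} (hf : f ∈ X) (y : Eu n) : T y f ∈ X := by
  have hmem : T y f ∈ closure (X : Set (Lp ℂ p (μn n))) := by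
    refine Metric.mem_closure_iff.2 fun δ hδ => ?_
    obtain ⟨ε₀, hε₀pos, hcont⟩ := Metric.continuousAt_iff.mp
      ((continuous_T hp f).continuousAt (x := y)) (δ/2) (by positivity)
    set B := Metric.ball y ε₀ with hB
    have hBfin : μn n B < ∞ := measure_ball_lt_top
    have hBpos : 0 < μn n B := Metric.measure_ball_pos _ _ hε₀pos
    set t : ℝ := (μn n B).toReal with ht
    have htpos : 0 < t := ENNReal.toReal_pos hBpos.ne' hBfin.ne
    set c : ℂ := ((t⁻¹ : ℝ) : ℂ) with hc
    set g : Lp ℂ 1 (μn n) := indicatorConstLp 1 measurableSet_ball hBfin.ne c with hg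
    have hgcoe : ⇑g =ᵐ[μn n] B.indicator (fun _ => c) := indicatorConstLp_coeFn
    set I : Lp ℂ p (μn n) := ∫ z, g z • T z f ∂(μn n) with hI
    refine ⟨I, hconv g f hf I (coeFn_integral_F hp g f), ?_⟩
    have hgint : ∫ z, g z ∂(μn n) = 1 := by
      rw [integral_congr_ae hgcoe, integral_indicator_const c measurableSet_ball]
      change t • c = 1
      rw [hc]
      rw [Complex.real_smul]
      push_cast
      rw [mul_inv_cancel₀ (by exact_mod_cast htpos.ne')]
    have hint1 : Integrable (fun z => g z • T z f) (μn n) := integrable_F hp g f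
    have hint2 : Integrable (fun z => g z • T y f) (μn n) :=
      (L1.integrable_coeFn g).smul_const _
    have hTy : ∫ z, g z • T y f ∂(μn n) = T y f := by
      rw [integral_smul_const, hgint, one_smul]
    have hdiff : I - T y f = ∫ z, (g z • T z f - g z • T y f) ∂(μn n) := by
      rw [integral_sub hint1 hint2, hTy]
    have hnormg : ∫ z, ‖g z‖ ∂(μn n) = 1 := by
      have h1 : (fun z => ‖g z‖) =ᵐ[μn n] B.indicator (fun _ => ‖c‖) := by
        filter_upwards [hgcoe] with z hz
        rw [hz, ← norm_indicator_eq_indicator_norm]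
      rw [integral_congr_ae h1, integral_indicator_const _ measurableSet_ball]
      change t • ‖c‖ = 1
      rw [hc]
      simp only [Complex.norm_real, Real.norm_eq_abs, abs_of_pos (inv_pos.2 htpos),
        smul_eq_mul]
      exact mul_inv_cancel₀ htpos.ne'
    have hbound : ‖∫ z, (g z • T z f - g z • T y f) ∂(μn n)‖ ≤ δ/2 := by
      have hbi : Integrable (fun z => (δ/2) * ‖g z‖) (μn n) :=
        ((L1.integrable_coeFn g).norm.const_mul _)
      have hae : ∀ᵐ z ∂(μn n), ‖g z • T z f - g z • T y f‖ ≤ (δ/2) * ‖g z‖ := by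
        filter_upwards [hgcoe] with z hz
        rw [← smul_sub, norm_smul]
        by_cases hzB : z ∈ B
        · have hd : dist (T z f) (T y f) < δ/2 := hcont (Metric.mem_ball.1 hzB)
          rw [mul_comm]
          exact mul_le_mul_of_nonneg_right (le_of_lt (by rwa [dist_eq_norm] at hd))
            (norm_nonneg _)
        · rw [hz, Set.indicator_of_notMem hzB]
          simp
      calc ‖∫ z, (g z • T z f - g z • T y f) ∂(μn n)‖
          ≤ ∫ z, (δ/2) * ‖g z‖ ∂(μn n) := norm_integral_le_of_norm_le hbi hae
        _ = (δ/2) * ∫ z, ‖g z‖ ∂(μn n) := integral_const_mul _ _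
        _ = δ/2 := by rw [hnormg, mul_one]
    have : dist (T y f) I < δ := by
      rw [dist_eq_norm, ← norm_neg, neg_sub, hdiff]
      exact lt_of_le_of_lt hbound (by linarith)
    exact this
  rwa [hXc.closure_eq] at hmem

end Stmt1Aux

/-- A closed linear subspace `X` of `L^p(ℝⁿ)` (`1 ≤ p < ∞`) is
translation invariant iff it is an `L¹(ℝⁿ)`-submodule of `L^p(ℝⁿ)`, i.e.
`g ∗ f ∈ X` for every `g ∈ L¹(ℝⁿ)` and `f ∈ X`. -/
theorem stmt1 (n : ℕ) (hn : 1 ≤ n) (p : ℝ≥0∞) [Fact (1 ≤ p)] (hptop : p ≠ ⊤)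
    (X : Submodule ℂ (Lp ℂ p (volume : Measure (EuclideanSpace ℝ (Fin n)))))
    (hXclosed : IsClosed (X : Set (Lp ℂ p (volume : Measure (EuclideanSpace ℝ (Fin n)))))) :
    (∀ f ∈ X, ∀ y : EuclideanSpace ℝ (Fin n),
      ∀ g : Lp ℂ p (volume : Measure (EuclideanSpace ℝ (Fin n))),
        (⇑g =ᵐ[volume] fun x => f (x - y)) → g ∈ X) ↔
    (∀ g : Lp ℂ 1 (volume : Measure (EuclideanSpace ℝ (Fin n))), ∀ f ∈ X,
      ∀ h : Lp ℂ p (volume : Measure (EuclideanSpace ℝ (Fin n))),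
        (⇑h =ᵐ[volume] fun x => ∫ y, g (x - y) * f y) → h ∈ X) := by
  constructor
  · intro hX g f hf h hh
    have hI := Stmt1Aux.coeFn_integral_F (n := n) hptop g f
    have : h = ∫ y, g y • Stmt1Aux.T y f ∂(Stmt1Aux.μn n) :=
      MeasureTheory.Lp.ext (hh.trans hI.symm)
    rw [this]
    exact Stmt1Aux.integral_F_mem hptop hXclosed hX g hf
  · intro hconv f hf y g hg
    have hT : Stmt1Aux.T y f ∈ X :=
      Stmt1Aux.T_mem_of_conv hptop hXclosed hconv hf y
    have : g = Stmt1Aux.T y f :=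
      MeasureTheory.Lp.ext (hg.trans (Stmt1Aux.coeFn_T y f).symm)
    rwa [this]
end
end

section
/- For every compact subset E of ℝ^n there exists a Schwartz function f on ℝ^n such that the zero set of its Fourier transform is exactly E, i.e., {ξ ∈ ℝ^n : f̂(ξ) = 0} = E. -/
open MeasureTheory Filter Topology
open scoped FourierTransform RealInnerProductSpace ENNReal

noncomputable section

open Complex Polynomial

lemma bdd_of_tendsto_cocompact {f : ℝ → ℝ} (hf : Continuous f)
    (h : Tendsto f (cocompact ℝ) (𝓝 0)) : ∃ C, ∀ x, f x ≤ C := by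
  let g : ZeroAtInftyContinuousMap ℝ ℝ := ⟨⟨f, hf⟩, h⟩
  exact ⟨‖g.toBCF‖, fun x ↦ (le_abs_self _).trans
    (by exact (Real.norm_eq_abs _).symm.trans_le (g.toBCF.norm_coe_le_norm x))⟩

lemma gauss_aux (m : ℕ) : ∃ C, ∀ x : ℝ, |x| ^ m * Real.exp (-x ^ 2) ≤ C := by
  apply bdd_of_tendsto_cocompact
  · exact (_root_.continuous_abs.pow m).mul ((continuous_pow 2).neg.rexp)
  · have := tendsto_rpow_abs_mul_exp_neg_mul_sq_cocompact (a := 1) one_pos (m : ℝ)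
    simpa [Real.rpow_natCast, neg_one_mul] using this

lemma hasDerivAt_polyGauss (p : ℂ[X]) (z : ℂ) :
    HasDerivAt (fun z ↦ p.eval z * Complex.exp (-z ^ 2))
      ((p.derivative.eval z - 2 * z * p.eval z) * Complex.exp (-z ^ 2)) z := by
  have h1 : HasDerivAt (fun z : ℂ ↦ Complex.exp (-z ^ 2))
      (Complex.exp (-z ^ 2) * (-(2 * z))) z := by
    have := ((hasDerivAt_pow 2 z).neg).cexp
    simpa using this
  have := (p.hasDerivAt z).fun_mul h1
  refine this.congr_deriv ?_
  ring

lemma iteratedDeriv_gauss (n : ℕ) : ∃ p : ℂ[X], ∀ x : ℝ,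
    iteratedDeriv n (fun x : ℝ ↦ Complex.exp (-(x : ℂ) ^ 2)) x
      = p.eval (x : ℂ) * Complex.exp (-(x : ℂ) ^ 2) := by
  induction n with
  | zero => exact ⟨1, fun x ↦ by simp⟩
  | succ n ih =>
    obtain ⟨p, hp⟩ := ih
    refine ⟨p.derivative - 2 * X * p, fun x ↦ ?_⟩
    rw [iteratedDeriv_succ, funext hp]
    have := (hasDerivAt_polyGauss p (x : ℂ)).comp_ofReal
    rw [this.deriv]
    simp [mul_assoc]

lemma poly_gauss_bound (p : ℂ[X]) (k : ℕ) :
    ∃ C, ∀ x : ℝ, |x| ^ k * ‖p.eval (x : ℂ) * Complex.exp (-(x : ℂ) ^ 2)‖ ≤ C := by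
  refine ⟨∑ i ∈ Finset.range (p.natDegree + 1), ‖p.coeff i‖ * (gauss_aux (k + i)).choose,
    fun x ↦ ?_⟩
  have hexp : ‖Complex.exp (-(x : ℂ) ^ 2)‖ = Real.exp (-x ^ 2) := by
    have hre : (-(x : ℂ) ^ 2).re = -x ^ 2 := by
      rw [← Complex.ofReal_pow, ← Complex.ofReal_neg, Complex.ofReal_re]
    rw [Complex.norm_exp, hre]
  have heval : ‖p.eval (x : ℂ)‖ ≤ ∑ i ∈ Finset.range (p.natDegree + 1), ‖p.coeff i‖ * |x| ^ i := by
    rw [Polynomial.eval_eq_sum_range]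
    refine (norm_sum_le _ _).trans (Finset.sum_le_sum fun i _ ↦ ?_)
    rw [norm_mul, norm_pow, Complex.norm_real, Real.norm_eq_abs]
  calc |x| ^ k * ‖p.eval (x : ℂ) * Complex.exp (-(x : ℂ) ^ 2)‖
      = (|x| ^ k * Real.exp (-x ^ 2)) * ‖p.eval (x : ℂ)‖ := by rw [norm_mul, hexp]; ring
    _ ≤ (|x| ^ k * Real.exp (-x ^ 2)) *
        ∑ i ∈ Finset.range (p.natDegree + 1), ‖p.coeff i‖ * |x| ^ i := by
        apply mul_le_mul_of_nonneg_left heval (by positivity)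
    _ = ∑ i ∈ Finset.range (p.natDegree + 1), ‖p.coeff i‖ * (|x| ^ (k + i) * Real.exp (-x ^ 2)) := by
        rw [Finset.mul_sum]; exact Finset.sum_congr rfl fun i _ ↦ by rw [pow_add]; ring
    _ ≤ _ := by
        refine Finset.sum_le_sum fun i _ ↦ ?_
        exact mul_le_mul_of_nonneg_left ((gauss_aux (k + i)).choose_spec x) (norm_nonneg _)

/-- The one-dimensional Gaussian as a Schwartz map. -/
def gauss1 : SchwartzMap ℝ ℂ where
  toFun x := Complex.exp (-(x : ℂ) ^ 2)
  smooth' := by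
    have h1 : ContDiff ℝ ((⊤ : ℕ∞) : WithTop ℕ∞) fun x : ℝ ↦ -(x : ℂ) ^ 2 :=
      (Complex.ofRealCLM.contDiff.pow 2).neg
    have h2 : ContDiff ℝ ((⊤ : ℕ∞) : WithTop ℕ∞) Complex.exp := (Complex.contDiff_exp (𝕜 := ℂ)).restrict_scalars ℝ
    exact h2.comp h1
  decay' := by
    intro k m
    obtain ⟨p, hp⟩ := iteratedDeriv_gauss m
    obtain ⟨C, hC⟩ := poly_gauss_bound p k
    refine ⟨C, fun x ↦ ?_⟩
    rw [norm_iteratedFDeriv_eq_norm_iteratedDeriv, hp x, Real.norm_eq_abs]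
    exact hC x

/-- The real inner product as a continuous bilinear (ℝ-linear) map. -/
def innerB {E : Type*} [NormedAddCommGroup E] [InnerProductSpace ℝ E] :
    E →L[ℝ] E →L[ℝ] ℝ := innerSL ℝ

@[simp] lemma innerB_apply {E : Type*} [NormedAddCommGroup E] [InnerProductSpace ℝ E]
    (x y : E) : innerB x y = ⟪x, y⟫ := rfl

set_option synthInstance.maxHeartbeats 1000000 in
lemma hasTemperateGrowth_innerSelf {E : Type*} [NormedAddCommGroup E]
    [InnerProductSpace ℝ E] :
    Function.HasTemperateGrowth (fun x : E ↦ ⟪x, x⟫) := by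
  apply Function.HasTemperateGrowth.of_fderiv (k := 2) (C := 1)
  · have hfd : fderiv ℝ (fun x : E ↦ ⟪x, x⟫)
        = fun x ↦ ((2 : ℝ) • (innerB : E →L[ℝ] E →L[ℝ] ℝ)) x := by
      funext x
      have h := (hasFDerivAt_id (𝕜 := ℝ) x).inner ℝ (hasFDerivAt_id x)
      simp only [id_eq] at h
      rw [h.fderiv]
      ext v
      simp [real_inner_comm, two_smul]
    rw [hfd]
    exact ((2 : ℝ) • (innerB : E →L[ℝ] E →L[ℝ] ℝ)).hasTemperateGrowth
  · exact differentiable_id.inner ℝ differentiable_id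
  · intro x
    rw [real_inner_self_eq_norm_sq, Real.norm_eq_abs, _root_.abs_of_nonneg (by positivity)]
    nlinarith [norm_nonneg x]

/-- A smooth compactly supported function is a Schwartz function. -/
def schwartzOfCompactSupport {D : Type*} [NormedAddCommGroup D] [NormedSpace ℝ D]
    (f : D → ℂ) (hf : ContDiff ℝ ((⊤ : ℕ∞) : WithTop ℕ∞) f) (h : HasCompactSupport f) :
    SchwartzMap D ℂ where
  toFun := f
  smooth' := hf
  decay' := by
    intro k m
    have h1 : Continuous fun x ↦ ‖x‖ ^ k * ‖iteratedFDeriv ℝ m f x‖ :=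
      (continuous_norm.pow k).mul (hf.continuous_iteratedFDeriv (mod_cast le_top)).norm
    have h2 : HasCompactSupport fun x ↦ ‖x‖ ^ k * ‖iteratedFDeriv ℝ m f x‖ :=
      ((h.iteratedFDeriv m).norm).mul_left
    obtain ⟨C, hC⟩ := h1.bounded_above_of_compact_support h2
    exact ⟨C, fun x ↦ le_trans (le_abs_self _) ((Real.norm_eq_abs _).symm.trans_le (hC x))⟩

/-- For every compact subset `E` of `ℝⁿ` there is a Schwartz
function `f` whose Fourier transform has zero set exactly `E`. -/
theorem stmt3 (n : ℕ) (E : Set (EuclideanSpace ℝ (Fin n))) (hE : IsCompact E) :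
    ∃ f : SchwartzMap (EuclideanSpace ℝ (Fin n)) ℂ,
      {ξ : EuclideanSpace ℝ (Fin n) | 𝓕 (⇑f) ξ = 0} = E := by
  classical
  obtain ⟨R, hR⟩ := hE.isBounded.subset_closedBall 0
  set t : Set (EuclideanSpace ℝ (Fin n)) := {x : EuclideanSpace ℝ (Fin n) | R + 1 ≤ ‖x‖}
    with htdef
  have ht : IsClosed t := isClosed_le continuous_const continuous_norm
  have hd : Disjoint E t := by
    rw [Set.disjoint_left]
    intro x hx hxt
    have h1 : ‖x‖ ≤ R := by
      simpa [Metric.mem_closedBall, dist_zero_right] using hR hx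
    have h2 : R + 1 ≤ ‖x‖ := hxt
    linarith
  obtain ⟨f, hfs, hfr, hf0, hf1⟩ :=
    exists_contMDiff_zero_iff_one_iff_of_isClosed
      (modelWithCornersSelf ℝ (EuclideanSpace ℝ (Fin n))) hE.isClosed ht hd
  have hfsmooth : ContDiff ℝ ((⊤ : ℕ∞) : WithTop ℕ∞) f := contMDiff_iff_contDiff.mp hfs
  -- the Gaussian-type Schwartz function on V
  have hg_upper : ∃ (kk : ℕ) (C : ℝ), ∀ x : EuclideanSpace ℝ (Fin n), ‖x‖ ≤ C * (1 + ‖(fun x : EuclideanSpace ℝ (Fin n) ↦ ⟪x, x⟫) x‖) ^ kk := by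
    refine ⟨1, 1, fun x ↦ ?_⟩
    simp only [real_inner_self_eq_norm_sq, Real.norm_eq_abs,
      _root_.abs_of_nonneg (by positivity : (0:ℝ) ≤ ‖x‖ ^ 2), pow_one, one_mul]
    nlinarith [norm_nonneg x]
  let G : SchwartzMap (EuclideanSpace ℝ (Fin n)) ℂ :=
    SchwartzMap.compCLM ℝ hasTemperateGrowth_innerSelf hg_upper gauss1
  have hGx : ∀ x : EuclideanSpace ℝ (Fin n), G x = Complex.exp (-((⟪x, x⟫ : ℝ) : ℂ) ^ 2) := fun x ↦ rfl
  have hGne : ∀ x, G x ≠ 0 := fun x ↦ by rw [hGx]; exact Complex.exp_ne_zero _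
  -- the compactly supported correction
  have hψsm : ContDiff ℝ ((⊤ : ℕ∞) : WithTop ℕ∞) (fun x : EuclideanSpace ℝ (Fin n) ↦ ((1 - f x : ℝ) : ℂ) * G x) := by
    exact (Complex.ofRealCLM.contDiff.comp (contDiff_const.sub hfsmooth)).mul G.smooth'
  have hψcs : HasCompactSupport (fun x : EuclideanSpace ℝ (Fin n) ↦ ((1 - f x : ℝ) : ℂ) * G x) := by
    have hcs : HasCompactSupport (fun x : EuclideanSpace ℝ (Fin n) ↦ ((1 - f x : ℝ) : ℂ)) := by
      apply HasCompactSupport.of_support_subset_isCompact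
        (isCompact_closedBall (0 : EuclideanSpace ℝ (Fin n)) (R + 1))
      intro x hx
      simp only [Function.mem_support, Ne, Complex.ofReal_eq_zero, sub_eq_zero] at hx
      have hxt : x ∉ t := fun hmem ↦ hx ((hf1 x).mp hmem).symm
      simp only [htdef, Set.mem_setOf_eq, not_le] at hxt
      simpa [Metric.mem_closedBall, dist_zero_right] using hxt.le
    exact hcs.mul_right
  let ψ : SchwartzMap (EuclideanSpace ℝ (Fin n)) ℂ := schwartzOfCompactSupport _ hψsm hψcs
  let g : SchwartzMap (EuclideanSpace ℝ (Fin n)) ℂ := G - ψ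
  have hgx : ∀ x : EuclideanSpace ℝ (Fin n), g x = ((f x : ℝ) : ℂ) * G x := by
    intro x
    have : g x = G x - ((1 - f x : ℝ) : ℂ) * G x := rfl
    rw [this]
    push_cast
    ring
  refine ⟨(SchwartzMap.fourierTransformCLE ℂ (SchwartzMap (EuclideanSpace ℝ (Fin n)) ℂ)).symm g, ?_⟩
  have hft : 𝓕 ⇑((SchwartzMap.fourierTransformCLE ℂ (SchwartzMap (EuclideanSpace ℝ (Fin n)) ℂ)).symm g) = ⇑g := by
    rw [← SchwartzMap.fourier_coe, ← SchwartzMap.fourierTransformCLE_apply (R := ℂ)]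
    exact congrArg _ (ContinuousLinearEquiv.apply_symm_apply _ g)
  ext ξ
  simp only [Set.mem_setOf_eq, congrFun hft ξ, hgx ξ, mul_eq_zero, Complex.ofReal_eq_zero]
  constructor
  · rintro (h0 | h0)
    · exact (hf0 ξ).mpr h0
    · exact absurd h0 (hGne ξ)
  · exact fun hξ ↦ Or.inl ((hf0 ξ).mp hξ)
end
end
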